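/- As ε → 0 one has the expansions 𝓘(ε) = (3/2)ε² + (3/4)ε³ + O(ε⁴), 𝓠(ε) = (3/2)ε² + (3/8)ε³ + O(ε⁴), and 𝓓(ε) = (3/2)ε² − (3/16)ε³ + O(ε⁴); that is, there exist constants C, ε₀ > 0 such that for all |ε| ≤ ε₀ each of the three differences |𝓘(ε) − ((3/2)ε² + (3/4)ε³)|, |𝓠(ε) − ((3/2)ε² + (3/8)ε³)|, |𝓓(ε) − ((3/2)ε² − (3/16)ε³)| is at most Cε⁴. -/

import Mathlib

open MeasureTheory Real Filter

noncomputable section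

/-- Partial derivative `∂ᵢ f`. -/
def pder (i : Fin 2) (f : (Fin 2 → ℝ) → ℝ) : (Fin 2 → ℝ) → ℝ :=
  fun x => fderiv ℝ f x (Pi.single i 1)

def dotp (a b : Fin 2 → ℝ) : ℝ := ∑ i, a i * b i

def kvec1 : Fin 2 → ℝ := ![1, 0]
def kvec2 : Fin 2 → ℝ := ![-(1/2), Real.sqrt 3 / 2]
def kvec3 : Fin 2 → ℝ := ![-(1/2), -(Real.sqrt 3 / 2)]

/-- The hexagonal profile `φ(x) = cos(k₁·x) + cos(k₂·x) + cos(k₃·x)`. -/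
def phiHex (x : Fin 2 → ℝ) : ℝ :=
  Real.cos (dotp kvec1 x) + Real.cos (dotp kvec2 x) + Real.cos (dotp kvec3 x)

def lvec1 : Fin 2 → ℝ := ![2 * π, 2 * π / Real.sqrt 3]
def lvec2 : Fin 2 → ℝ := ![0, 4 * π / Real.sqrt 3]

/-- Fundamental parallelogram `Ω = {s ℓ₁ + t ℓ₂ : 0 ≤ s, t < 1}`. -/
def Omega : Set (Fin 2 → ℝ) :=
  {y | ∃ s t : ℝ, 0 ≤ s ∧ s < 1 ∧ 0 ≤ t ∧ t < 1 ∧ y = s • lvec1 + t • lvec2}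

/-- The normalized Haar average `⟨G⟩ = (1/|Ω|) ∫_Ω G`, where `|Ω| = 8π²/√3`. -/
def haarAvg (G : (Fin 2 → ℝ) → ℝ) : ℝ :=
  (Real.sqrt 3 / (8 * π ^ 2)) * ∫ x in Omega, G x

/-- `|∇φ|²`. -/
def gradSq (x : Fin 2 → ℝ) : ℝ := ∑ i, (pder i phiHex x) ^ 2

/-- Hessian entry `(∇²φ)ᵢⱼ = ∂ᵢ∂ⱼφ`. -/
def hessHex (i j : Fin 2) (x : Fin 2 → ℝ) : ℝ := pder i (pder j phiHex) x

/-- `|∇²φ|² = Σ_{i,j} (∂ᵢ∂ⱼφ)²`. -/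
def hessSq (x : Fin 2 → ℝ) : ℝ := ∑ i, ∑ j, (hessHex i j x) ^ 2

/-- `|∇∇²φ|² = Σ_{i,j,k} (∂_k∂ᵢ∂ⱼφ)²`. -/
def thirdSq (x : Fin 2 → ℝ) : ℝ :=
  ∑ k, ∑ i, ∑ j, (pder k (pder i (pder j phiHex)) x) ^ 2

/-- `tr((∇²φ)³)`. -/
def trHess3 (x : Fin 2 → ℝ) : ℝ :=
  ∑ i, ∑ j, ∑ k, hessHex i j x * hessHex j k x * hessHex k i x

/-- `Z_ε = ⟨e^{εφ}⟩`. -/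
def Zt (ε : ℝ) : ℝ := haarAvg (fun x => Real.exp (ε * phiHex x))

/-- `𝓘(ε) = ⟨εφ e^{εφ}⟩ / Z_ε`. -/
def calIT (ε : ℝ) : ℝ :=
  haarAvg (fun x => ε * phiHex x * Real.exp (ε * phiHex x)) / Zt ε

/-- `𝓠(ε) = ⟨ε²|∇²φ|² e^{εφ}⟩ / Z_ε`. -/
def calQT (ε : ℝ) : ℝ :=
  haarAvg (fun x => ε ^ 2 * hessSq x * Real.exp (ε * phiHex x)) / Zt ε

/-- `𝓓(ε) = ⟨(ε²|∇∇²φ|² − 2ε³ tr((∇²φ)³)) e^{εφ}⟩ / Z_ε`. -/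
def calDT (ε : ℝ) : ℝ :=
  haarAvg (fun x => (ε ^ 2 * thirdSq x - 2 * ε ^ 3 * trHess3 x) * Real.exp (ε * phiHex x)) / Zt ε

/-!
Parametrize `Ω` by `s ℓ₁ + t ℓ₂` with `(s, t) ∈ [0, 1)²`. The wave vectors lie in the dual
lattice, `kₘ · (s ℓ₁ + t ℓ₂) = 2π (aₘ s + bₘ t)` with `aₘ, bₘ ∈ {-1, 0, 1}`, so a polynomial of
degree `≤ n` in the `cos (kₘ · x)`, `sin (kₘ · x)` is, in `s` and in `t` separately, a
trigonometric polynomial of degree `≤ n`. For such polynomials with `n < N` the `N`-point rule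
`∫₀¹ f = (1/N) ∑ⱼ f (j/N)` is exact (sums of nontrivial roots of unity vanish), so the Haar
average of a polynomial of degree `≤ 3` in the waves is an average over the `16` points
`(j ℓ₁ + k ℓ₂)/4`, where all phases are multiples of `π/2`.

Since `∂ᵢ cos (k · x) = -kᵢ sin (k · x)`, the quantities `|∇²φ|²`, `|∇∇²φ|²` and `tr ((∇²φ)³)`
are such polynomials of degree `2`, `2` and `3`. Expanding `e^{εφ}` (to second order in `𝓘`, to
first order behind the factor `ε²` in `𝓠` and `𝓓`) leaves polynomial main parts, whose averages
are read off the `16` points, and remainders of size `O(ε⁴)`; dividing by `Z_ε = 1 + O(ε²)`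
keeps the error `O(ε⁴)`.
-/

open Finset

/-! ## Trigonometric polynomials and exact quadrature -/

def trigPoly (n : ℕ) : Submodule ℝ (ℝ → ℝ) :=
  Submodule.span ℝ {f | ∃ k : ℤ, k.natAbs ≤ n ∧
    (f = (fun t => cos (2 * π * k * t)) ∨ f = fun t => sin (2 * π * k * t))}

lemma cos_mem_trigPoly {n : ℕ} {k : ℤ} (hk : k.natAbs ≤ n) :
    (fun t => cos (2 * π * k * t)) ∈ trigPoly n :=
  Submodule.subset_span ⟨k, hk, Or.inl rfl⟩

lemma sin_mem_trigPoly {n : ℕ} {k : ℤ} (hk : k.natAbs ≤ n) :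
    (fun t => sin (2 * π * k * t)) ∈ trigPoly n :=
  Submodule.subset_span ⟨k, hk, Or.inr rfl⟩

lemma const_mem_trigPoly (n : ℕ) (c : ℝ) : (fun _ => c) ∈ trigPoly n := by
  convert (trigPoly n).smul_mem c (cos_mem_trigPoly (k := 0) (Nat.zero_le n)) using 1
  ext t; simp

lemma trigPoly_mono {m n : ℕ} (h : m ≤ n) : trigPoly m ≤ trigPoly n :=
  Submodule.span_mono fun _ ⟨k, hk, hf⟩ => ⟨k, hk.trans h, hf⟩

lemma cos_mul_add_mem_trigPoly (k : ℤ) (c : ℝ) :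
    (fun t => cos (2 * π * k * t + c)) ∈ trigPoly k.natAbs := by
  convert sub_mem ((trigPoly _).smul_mem (cos c) (cos_mem_trigPoly le_rfl))
    ((trigPoly _).smul_mem (sin c) (sin_mem_trigPoly le_rfl)) using 1
  ext t; simp only [cos_add, Pi.sub_apply, Pi.smul_apply, smul_eq_mul]; ring

lemma sin_mul_add_mem_trigPoly (k : ℤ) (c : ℝ) :
    (fun t => sin (2 * π * k * t + c)) ∈ trigPoly k.natAbs := by
  convert add_mem ((trigPoly _).smul_mem (cos c) (sin_mem_trigPoly le_rfl))
    ((trigPoly _).smul_mem (sin c) (cos_mem_trigPoly le_rfl)) using 1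
  ext t; simp only [sin_add, Pi.add_apply, Pi.smul_apply, smul_eq_mul]; ring

lemma trigPoly_mul_le (m n : ℕ) : trigPoly m * trigPoly n ≤ trigPoly (m + n) := by
  rw [trigPoly, trigPoly, Submodule.span_mul_span, Submodule.span_le]
  rintro _ ⟨f, ⟨j, hj, hf⟩, g, ⟨k, hk, hg⟩, rfl⟩
  have hadd := (Int.natAbs_add_le j k).trans (add_le_add hj hk)
  have hsub := (Int.natAbs_sub_le j k).trans (add_le_add hj hk)
  have hplus (t : ℝ) : 2 * π * ((j + k : ℤ) : ℝ) * t = 2 * π * j * t + 2 * π * k * t := by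
    push_cast; ring
  have hminus (t : ℝ) : 2 * π * ((j - k : ℤ) : ℝ) * t = 2 * π * j * t - 2 * π * k * t := by
    push_cast; ring
  have cosPlus := (trigPoly _).smul_mem (1 / 2 : ℝ) (cos_mem_trigPoly hadd)
  have cosMinus := (trigPoly _).smul_mem (1 / 2 : ℝ) (cos_mem_trigPoly hsub)
  have sinPlus := (trigPoly _).smul_mem (1 / 2 : ℝ) (sin_mem_trigPoly hadd)
  have sinMinus := (trigPoly _).smul_mem (1 / 2 : ℝ) (sin_mem_trigPoly hsub)
  change f * g ∈ trigPoly (m + n)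
  rcases hf with rfl | rfl <;> rcases hg with rfl | rfl
  · convert add_mem cosPlus cosMinus using 1
    ext t; simp only [Pi.mul_apply, Pi.add_apply, Pi.smul_apply, smul_eq_mul, hplus, hminus,
      cos_add, cos_sub]; ring
  · convert sub_mem sinPlus sinMinus using 1
    ext t; simp only [Pi.mul_apply, Pi.sub_apply, Pi.smul_apply, smul_eq_mul, hplus, hminus,
      sin_add, sin_sub]; ring
  · convert add_mem sinPlus sinMinus using 1
    ext t; simp only [Pi.mul_apply, Pi.add_apply, Pi.smul_apply, smul_eq_mul, hplus, hminus,
      sin_add, sin_sub]; ring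
  · convert sub_mem cosMinus cosPlus using 1
    ext t; simp only [Pi.mul_apply, Pi.sub_apply, Pi.smul_apply, smul_eq_mul, hplus, hminus,
      cos_add, cos_sub]; ring

lemma continuous_of_mem_trigPoly {n : ℕ} {f : ℝ → ℝ} (hf : f ∈ trigPoly n) : Continuous f := by
  induction hf using Submodule.span_induction with
  | mem f hf => obtain ⟨k, -, rfl | rfl⟩ := hf <;> fun_prop
  | zero => exact continuous_const
  | add f g _ _ hf hg => exact hf.add hg
  | smul c f _ hf => exact hf.const_smul c

lemma sum_cos_sin_nodes_eq_zero {N : ℕ} {k : ℤ} (hk : ¬ (N : ℤ) ∣ k) :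
    ∑ j ∈ range N, cos (2 * π * k * (j / N)) = 0 ∧
      ∑ j ∈ range N, sin (2 * π * k * (j / N)) = 0 := by
  obtain rfl | hN := N.eq_zero_or_pos
  · simp
  have hω := Complex.isPrimitiveRoot_exp N hN.ne'
  set ζ := Complex.exp (2 * π * Complex.I / N) ^ k with hζ_def
  have hζ : ζ ≠ 1 := by rwa [Ne, hω.zpow_eq_one_iff_dvd]
  have hζN : ζ ^ N = 1 := by
    rw [← zpow_natCast, ← zpow_mul, mul_comm k, zpow_mul, zpow_natCast, hω.pow_eq_one, one_zpow]
  have hsum : ∑ j ∈ range N, Complex.exp (↑(2 * π * k * (j / N)) * Complex.I) = 0 := by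
    have hpow (j : ℕ) : Complex.exp (↑(2 * π * k * (j / N)) * Complex.I) = ζ ^ j := by
      rw [hζ_def, ← Complex.exp_int_mul, ← Complex.exp_nat_mul]; congr 1; push_cast; ring
    simp only [hpow, geom_sum_eq hζ, hζN, sub_self, zero_div]
  constructor
  · have h := congrArg Complex.re hsum
    rw [Complex.re_sum, Complex.zero_re] at h
    simpa only [Complex.exp_ofReal_mul_I_re] using h
  · have h := congrArg Complex.im hsum
    rw [Complex.im_sum, Complex.zero_im] at h
    simpa only [Complex.exp_ofReal_mul_I_im] using h

lemma integral_cos_sin_eq_zero {k : ℤ} (hk : k ≠ 0) :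
    ∫ t in (0 : ℝ)..1, cos (2 * π * k * t) = 0 ∧ ∫ t in (0 : ℝ)..1, sin (2 * π * k * t) = 0 := by
  have hc : 2 * π * k ≠ 0 := by positivity
  have hsin : sin (2 * π * k) = 0 := by
    simpa [mul_comm, mul_assoc, mul_left_comm] using sin_int_mul_pi (2 * k)
  have hcos : cos (2 * π * k) = 1 := by
    simpa [mul_comm] using cos_int_mul_two_pi k
  rw [intervalIntegral.integral_comp_mul_left (fun x => cos x) hc,
    intervalIntegral.integral_comp_mul_left (fun x => sin x) hc, integral_cos, integral_sin]
  simp [hsin, hcos]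

theorem integral_eq_sum_nodes_of_mem_trigPoly {n N : ℕ} (hnN : n < N) {f : ℝ → ℝ}
    (hf : f ∈ trigPoly n) : ∫ t in (0 : ℝ)..1, f t = (∑ j ∈ range N, f (j / N)) / N := by
  have hN : (N : ℝ) ≠ 0 := by exact_mod_cast (Nat.zero_le n).trans_lt hnN |>.ne'
  induction hf using Submodule.span_induction with
  | mem f hf =>
    obtain ⟨k, hk, rfl | rfl⟩ := hf
    all_goals obtain rfl | hk0 := eq_or_ne k 0
    · simp [hN]
    · have hdvd : ¬ (N : ℤ) ∣ k := fun h =>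
        hk0 (Int.eq_zero_of_dvd_of_natAbs_lt_natAbs h (by omega))
      simp [(integral_cos_sin_eq_zero hk0).1, (sum_cos_sin_nodes_eq_zero hdvd).1]
    · simp
    · have hdvd : ¬ (N : ℤ) ∣ k := fun h =>
        hk0 (Int.eq_zero_of_dvd_of_natAbs_lt_natAbs h (by omega))
      simp [(integral_cos_sin_eq_zero hk0).2, (sum_cos_sin_nodes_eq_zero hdvd).2]
  | zero => simp
  | add f g hf hg ihf ihg =>
    simp only [Pi.add_apply]
    rw [intervalIntegral.integral_add ((continuous_of_mem_trigPoly hf).intervalIntegrable _ _)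
      ((continuous_of_mem_trigPoly hg).intervalIntegrable _ _), ihf, ihg, sum_add_distrib,
      add_div]
  | smul c f _ ihf =>
    simp only [Pi.smul_apply, smul_eq_mul, intervalIntegral.integral_const_mul, ihf, ← mul_sum,
      mul_div_assoc]

lemma comp_mem_trigPoly_of_mem_span_pow {X : Type*} {S : Set (X → ℝ)} {γ : ℝ → X}
    (hS : ∀ f ∈ S, f ∘ γ ∈ trigPoly 1) {n : ℕ} {g : X → ℝ}
    (hg : g ∈ Submodule.span ℝ S ^ n) : g ∘ γ ∈ trigPoly n := by
  have hspan : Submodule.span ℝ S ≤ (trigPoly 1).comap (LinearMap.funLeft ℝ ℝ γ) :=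
    Submodule.span_le.mpr hS
  induction hg using Submodule.pow_induction_on_left' with
  | algebraMap r => exact const_mem_trigPoly 0 r
  | add f g _ _ _ hf hg => exact add_mem hf hg
  | mem_mul m hm i f _ hf =>
    rw [Nat.succ_eq_add_one, add_comm]
    exact trigPoly_mul_le 1 i (Submodule.mul_mem_mul (hspan hm) hf)

lemma continuous_of_mem_span_pow {X : Type*} [TopologicalSpace X] {S : Set (X → ℝ)}
    (hS : ∀ f ∈ S, Continuous f) {n : ℕ} {g : X → ℝ}
    (hg : g ∈ Submodule.span ℝ S ^ n) : Continuous g := by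
  induction hg using Submodule.pow_induction_on_left' with
  | algebraMap r => exact continuous_const
  | add f g _ _ _ hf hg => exact hf.add hg
  | mem_mul m hm i f _ hf =>
    refine Continuous.mul ?_ hf
    induction hm using Submodule.span_induction with
    | mem f hf => exact hS f hf
    | zero => exact continuous_const
    | add f g _ _ hf hg => exact hf.add hg
    | smul c f _ hf => exact hf.const_smul c

/-! ## Derivatives of the hexagonal profile -/

def hexWave : Fin 3 → Fin 2 → ℝ := ![kvec1, kvec2, kvec3]

def waveSum (f : ℝ → ℝ) (a : Fin 3 → ℝ) (x : Fin 2 → ℝ) : ℝ :=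
  ∑ m, a m * f (dotp (hexWave m) x)

def dotpCLM (k : Fin 2 → ℝ) : (Fin 2 → ℝ) →L[ℝ] ℝ := ∑ j, k j • ContinuousLinearMap.proj j

lemma dotpCLM_apply (k v : Fin 2 → ℝ) : dotpCLM k v = dotp k v := by
  simp [dotpCLM, dotp]

lemma hasFDerivAt_dotp (k x : Fin 2 → ℝ) : HasFDerivAt (dotp k) (dotpCLM k) x := by
  convert (dotpCLM k).hasFDerivAt using 1
  ext v; exact (dotpCLM_apply k v).symm

@[fun_prop]
lemma continuous_dotp (k : Fin 2 → ℝ) : Continuous (dotp k) := by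
  unfold dotp; fun_prop

lemma dotp_single (k : Fin 2 → ℝ) (i : Fin 2) : dotp k (Pi.single i 1) = k i := by
  fin_cases i <;> simp [dotp, Fin.sum_univ_two]

lemma pder_waveSum_cos (i : Fin 2) (a : Fin 3 → ℝ) :
    pder i (waveSum cos a) = waveSum sin (fun m => -(a m * hexWave m i)) := by
  ext x
  have h : HasFDerivAt (waveSum cos a)
      (∑ m, a m • -sin (dotp (hexWave m) x) • dotpCLM (hexWave m)) x :=
    HasFDerivAt.fun_sum fun m _ => ((hasFDerivAt_dotp _ x).cos).const_mul (a m)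
  simp only [pder, h.fderiv, _root_.sum_apply, _root_.smul_apply, dotpCLM_apply,
    dotp_single, smul_eq_mul, waveSum]
  exact sum_congr rfl fun m _ => by ring

lemma pder_waveSum_sin (i : Fin 2) (a : Fin 3 → ℝ) :
    pder i (waveSum sin a) = waveSum cos (fun m => a m * hexWave m i) := by
  ext x
  have h : HasFDerivAt (waveSum sin a)
      (∑ m, a m • cos (dotp (hexWave m) x) • dotpCLM (hexWave m)) x :=
    HasFDerivAt.fun_sum fun m _ => ((hasFDerivAt_dotp _ x).sin).const_mul (a m)
  simp only [pder, h.fderiv, _root_.sum_apply, _root_.smul_apply, dotpCLM_apply,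
    dotp_single, smul_eq_mul, waveSum]
  exact sum_congr rfl fun m _ => by ring

lemma phiHex_eq_waveSum : phiHex = waveSum cos 1 := by
  ext x; simp [phiHex, waveSum, Fin.sum_univ_three, hexWave]

lemma hessHex_eq_waveSum (i j : Fin 2) :
    hessHex i j = waveSum cos (fun m => -(hexWave m i * hexWave m j)) := by
  ext x
  simp only [hessHex, phiHex_eq_waveSum, pder_waveSum_cos, pder_waveSum_sin, waveSum]
  exact sum_congr rfl fun m _ => by simp only [Pi.one_apply]; ring

lemma pder_pder_pder_phiHex (k i j : Fin 2) :
    pder k (pder i (pder j phiHex)) =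
      waveSum sin (fun m => hexWave m i * hexWave m j * hexWave m k) := by
  ext x
  simp only [phiHex_eq_waveSum, pder_waveSum_cos, pder_waveSum_sin, waveSum]
  exact sum_congr rfl fun m _ => by simp only [Pi.one_apply]; ring

lemma hexWave_rows : hexWave 0 = kvec1 ∧ hexWave 1 = kvec2 ∧ hexWave 2 = kvec3 :=
  ⟨rfl, rfl, rfl⟩

lemma kvec_entries :
    kvec1 0 = 1 ∧ kvec1 1 = 0 ∧ kvec2 0 = -(1 / 2) ∧ kvec2 1 = √3 / 2 ∧
      kvec3 0 = -(1 / 2) ∧ kvec3 1 = -(√3 / 2) :=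
  ⟨rfl, rfl, rfl, rfl, rfl, rfl⟩

lemma sqrt_three_pow : √3 ^ 2 = 3 ∧ √3 ^ 4 = 9 ∧ √3 ^ 6 = 27 := by
  have h : √3 ^ 2 = 3 := Real.sq_sqrt (by norm_num)
  refine ⟨h, ?_, ?_⟩
  · rw [show 4 = 2 * 2 from rfl, pow_mul, h]; norm_num
  · rw [show 6 = 2 * 3 from rfl, pow_mul, h]; norm_num

lemma hessSq_eq (x : Fin 2 → ℝ) : hessSq x =
    (cos (dotp kvec1 x) ^ 2 + cos (dotp kvec2 x) ^ 2 + cos (dotp kvec3 x) ^ 2)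
    + (cos (dotp kvec1 x) * cos (dotp kvec2 x) + cos (dotp kvec1 x) * cos (dotp kvec3 x)
       + cos (dotp kvec2 x) * cos (dotp kvec3 x)) / 2 := by
  obtain ⟨w0, w1, w2⟩ := hexWave_rows
  obtain ⟨e00, e01, e10, e11, e20, e21⟩ := kvec_entries
  obtain ⟨s2, s4, -⟩ := sqrt_three_pow
  simp only [hessSq, hessHex_eq_waveSum, waveSum, Fin.sum_univ_two, Fin.sum_univ_three, w0, w1,
    w2, e00, e01, e10, e11, e20, e21]
  ring_nf
  simp only [s2, s4]
  ring

lemma thirdSq_eq (x : Fin 2 → ℝ) : thirdSq x =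
    (sin (dotp kvec1 x) ^ 2 + sin (dotp kvec2 x) ^ 2 + sin (dotp kvec3 x) ^ 2)
    - (sin (dotp kvec1 x) * sin (dotp kvec2 x) + sin (dotp kvec1 x) * sin (dotp kvec3 x)
       + sin (dotp kvec2 x) * sin (dotp kvec3 x)) / 4 := by
  obtain ⟨w0, w1, w2⟩ := hexWave_rows
  obtain ⟨e00, e01, e10, e11, e20, e21⟩ := kvec_entries
  obtain ⟨s2, s4, s6⟩ := sqrt_three_pow
  simp only [thirdSq, pder_pder_pder_phiHex, waveSum, Fin.sum_univ_two, Fin.sum_univ_three, w0,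
    w1, w2, e00, e01, e10, e11, e20, e21]
  ring_nf
  simp only [s2, s4, s6]
  ring

lemma trHess3_eq (x : Fin 2 → ℝ) : trHess3 x =
    -(cos (dotp kvec1 x) ^ 3 + cos (dotp kvec2 x) ^ 3 + cos (dotp kvec3 x) ^ 3)
    - 3 / 4 * (cos (dotp kvec1 x) ^ 2 * cos (dotp kvec2 x)
      + cos (dotp kvec1 x) ^ 2 * cos (dotp kvec3 x) + cos (dotp kvec2 x) ^ 2 * cos (dotp kvec1 x)
      + cos (dotp kvec2 x) ^ 2 * cos (dotp kvec3 x) + cos (dotp kvec3 x) ^ 2 * cos (dotp kvec1 x)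
      + cos (dotp kvec3 x) ^ 2 * cos (dotp kvec2 x))
    + 3 / 4 * (cos (dotp kvec1 x) * cos (dotp kvec2 x) * cos (dotp kvec3 x)) := by
  obtain ⟨w0, w1, w2⟩ := hexWave_rows
  obtain ⟨e00, e01, e10, e11, e20, e21⟩ := kvec_entries
  obtain ⟨s2, s4, s6⟩ := sqrt_three_pow
  simp only [trHess3, hessHex_eq_waveSum, waveSum, Fin.sum_univ_two, Fin.sum_univ_three, w0, w1,
    w2, e00, e01, e10, e11, e20, e21]
  ring_nf
  simp only [s2, s4, s6]
  ring

/-! ## Averages over the fundamental parallelogram -/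

def latticeMap : (Fin 2 → ℝ) →L[ℝ] (Fin 2 → ℝ) :=
  (ContinuousLinearMap.proj 0).smulRight lvec1 + (ContinuousLinearMap.proj 1).smulRight lvec2

lemma latticeMap_apply (y : Fin 2 → ℝ) : latticeMap y = y 0 • lvec1 + y 1 • lvec2 := rfl

def unitSquare : Set (Fin 2 → ℝ) := Set.univ.pi fun _ => Set.Ico 0 1

lemma Omega_eq_image : Omega = latticeMap '' unitSquare := by
  ext x
  simp only [Omega, unitSquare, Set.mem_image, Set.mem_univ_pi, Set.mem_Ico, Fin.forall_fin_two,
    latticeMap_apply]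
  constructor
  · rintro ⟨s, t, hs0, hs1, ht0, ht1, rfl⟩
    exact ⟨![s, t], ⟨⟨hs0, hs1⟩, ⟨ht0, ht1⟩⟩, rfl⟩
  · rintro ⟨y, ⟨⟨hs0, hs1⟩, ⟨ht0, ht1⟩⟩, rfl⟩
    exact ⟨y 0, y 1, hs0, hs1, ht0, ht1, rfl⟩

lemma det_latticeMap : latticeMap.det = 8 * π ^ 2 / √3 := by
  have h : (latticeMap : (Fin 2 → ℝ) →ₗ[ℝ] (Fin 2 → ℝ)) =
      Matrix.toLin' (Matrix.of ![![lvec1 0, lvec2 0], ![lvec1 1, lvec2 1]]) := by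
    ext y i
    fin_cases i <;>
      simp [latticeMap_apply, Matrix.mulVec, dotProduct, Fin.sum_univ_two, mul_comm]
  rw [ContinuousLinearMap.det, h, LinearMap.det_toLin', Matrix.det_fin_two_of]
  have h3 : √3 ≠ 0 := by positivity
  simp only [lvec1, lvec2, Matrix.cons_val_zero, Matrix.cons_val_one]
  field_simp
  ring

lemma latticeMap_injective : Function.Injective latticeMap := by
  have hdet : IsUnit (latticeMap : (Fin 2 → ℝ) →ₗ[ℝ] (Fin 2 → ℝ)).det := by
    rw [← ContinuousLinearMap.det, det_latticeMap]
    exact isUnit_iff_ne_zero.mpr (by positivity)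
  exact ((Module.End.isUnit_iff _).mp ((LinearMap.isUnit_iff_isUnit_det _).mpr hdet)).1

lemma setIntegral_Omega (g : (Fin 2 → ℝ) → ℝ) :
    ∫ x in Omega, g x = 8 * π ^ 2 / √3 * ∫ y in unitSquare, g (latticeMap y) := by
  have hs : MeasurableSet unitSquare := MeasurableSet.univ_pi fun _ => measurableSet_Ico
  rw [Omega_eq_image, integral_image_eq_integral_abs_det_fderiv_smul volume hs
    (fun y _ => latticeMap.hasFDerivAt.hasFDerivWithinAt) latticeMap_injective.injOn,
    det_latticeMap, abs_of_pos (by positivity)]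
  simp only [smul_eq_mul, integral_const_mul]

lemma setIntegral_unitSquare {G : ℝ → ℝ → ℝ} (hG : Continuous fun p : ℝ × ℝ => G p.1 p.2) :
    ∫ y in unitSquare, G (y 0) (y 1) = ∫ s in (0 : ℝ)..1, ∫ t in (0 : ℝ)..1, G s t := by
  have hpre :
      unitSquare = MeasurableEquiv.finTwoArrow ⁻¹' (Set.Ico (0 : ℝ) 1 ×ˢ Set.Ico 0 1) := by
    ext y; simp [unitSquare, Fin.forall_fin_two]
  rw [hpre]
  refine ((volume_preserving_finTwoArrow ℝ).setIntegral_preimage_emb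
    (MeasurableEquiv.measurableEmbedding _) (fun p => G p.1 p.2) _).trans ?_
  rw [Measure.volume_eq_prod, setIntegral_prod _
    ((hG.continuousOn.integrableOn_compact (isCompact_Icc.prod isCompact_Icc)).mono_set
      (Set.prod_mono Set.Ico_subset_Icc_self Set.Ico_subset_Icc_self))]
  simp only [intervalIntegral.integral_of_le zero_le_one, integral_Ioc_eq_integral_Ioo,
    integral_Ico_eq_integral_Ioo]

lemma haarAvg_eq_integral_lattice {g : (Fin 2 → ℝ) → ℝ} (hg : Continuous g) :
    haarAvg g = ∫ s in (0 : ℝ)..1, ∫ t in (0 : ℝ)..1, g (s • lvec1 + t • lvec2) := by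
  rw [haarAvg, setIntegral_Omega,
    ← setIntegral_unitSquare (G := fun s t => g (s • lvec1 + t • lvec2)) (by fun_prop)]
  have h3 : √3 ≠ 0 := by positivity
  field_simp
  rfl

lemma integrableOn_Omega {g : (Fin 2 → ℝ) → ℝ} (hg : Continuous g) : IntegrableOn g Omega := by
  have hK : IsCompact (latticeMap '' Set.univ.pi fun _ => Set.Icc (0 : ℝ) 1) :=
    (isCompact_univ_pi fun _ => isCompact_Icc).image latticeMap.continuous
  refine (hg.continuousOn.integrableOn_compact hK).mono_set ?_
  rw [Omega_eq_image]
  exact Set.image_mono (Set.pi_mono fun _ _ => Set.Ico_subset_Icc_self)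

lemma haarAvg_add {f g : (Fin 2 → ℝ) → ℝ} (hf : Continuous f) (hg : Continuous g) :
    haarAvg (fun x => f x + g x) = haarAvg f + haarAvg g := by
  simp only [haarAvg, integral_add (integrableOn_Omega hf) (integrableOn_Omega hg), mul_add]

lemma abs_haarAvg_le {g : (Fin 2 → ℝ) → ℝ} (hg : Continuous g) {M : ℝ} (hM : ∀ x, |g x| ≤ M) :
    |haarAvg g| ≤ M := by
  rw [haarAvg_eq_integral_lattice hg]
  have inner (s : ℝ) : ‖∫ t in (0 : ℝ)..1, g (s • lvec1 + t • lvec2)‖ ≤ M := by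
    simpa using intervalIntegral.norm_integral_le_of_norm_le_const (a := 0) (b := 1)
      (f := fun t => g (s • lvec1 + t • lvec2)) fun t _ => hM _
  simpa using intervalIntegral.norm_integral_le_of_norm_le_const (a := 0) (b := 1)
    fun s _ => inner s

lemma abs_haarAvg_sub_le {F M R : (Fin 2 → ℝ) → ℝ} (hF : ∀ x, F x = M x + R x)
    (hM : Continuous M) (hR : Continuous R) {K : ℝ} (hK : ∀ x, |R x| ≤ K) :
    |haarAvg F - haarAvg M| ≤ K := by
  rw [show F = fun x => M x + R x from funext hF, haarAvg_add hM hR, add_sub_cancel_left]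
  exact abs_haarAvg_le hR hK

/-! ## Exact averages of hexagonal trigonometric polynomials -/

def hexWaves : Set ((Fin 2 → ℝ) → ℝ) :=
  {f | ∃ m, f = (fun x => cos (dotp (hexWave m) x)) ∨ f = fun x => sin (dotp (hexWave m) x)}

def hexTrigPoly (n : ℕ) : Submodule ℝ ((Fin 2 → ℝ) → ℝ) :=
  Submodule.span ℝ (insert 1 hexWaves) ^ n

lemma hexTrigPoly_mono {m n : ℕ} (h : m ≤ n) : hexTrigPoly m ≤ hexTrigPoly n :=
  pow_le_pow_right' (Submodule.one_le.mpr (Submodule.subset_span (Set.mem_insert _ _))) h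

lemma mul_mem_hexTrigPoly {m n : ℕ} {f g : (Fin 2 → ℝ) → ℝ} (hf : f ∈ hexTrigPoly m)
    (hg : g ∈ hexTrigPoly n) : f * g ∈ hexTrigPoly (m + n) := by
  rw [hexTrigPoly, pow_add]
  exact Submodule.mul_mem_mul hf hg

lemma pow_mem_hexTrigPoly {m : ℕ} {f : (Fin 2 → ℝ) → ℝ} (hf : f ∈ hexTrigPoly m) (k : ℕ) :
    f ^ k ∈ hexTrigPoly (m * k) := by
  rw [hexTrigPoly, pow_mul]
  exact Submodule.pow_mem_pow _ hf k

lemma const_mem_hexTrigPoly (n : ℕ) (c : ℝ) : (fun _ => c) ∈ hexTrigPoly n :=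
  hexTrigPoly_mono (Nat.zero_le n) (Submodule.mem_one.mpr ⟨c, rfl⟩)

lemma cos_dotp_mem_hexTrigPoly (m : Fin 3) :
    (fun x => cos (dotp (hexWave m) x)) ∈ hexTrigPoly 1 := by
  rw [hexTrigPoly, pow_one]
  exact Submodule.subset_span (Set.mem_insert_of_mem _ ⟨m, Or.inl rfl⟩)

lemma sin_dotp_mem_hexTrigPoly (m : Fin 3) :
    (fun x => sin (dotp (hexWave m) x)) ∈ hexTrigPoly 1 := by
  rw [hexTrigPoly, pow_one]
  exact Submodule.subset_span (Set.mem_insert_of_mem _ ⟨m, Or.inr rfl⟩)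

lemma continuous_of_mem_hexTrigPoly {n : ℕ} {g : (Fin 2 → ℝ) → ℝ} (hg : g ∈ hexTrigPoly n) :
    Continuous g := by
  refine continuous_of_mem_span_pow ?_ hg
  rintro f (rfl | ⟨m, rfl | rfl⟩)
  · exact continuous_const
  all_goals fun_prop

lemma dotp_kvec_lattice (s t : ℝ) :
    dotp kvec1 (s • lvec1 + t • lvec2) = 2 * π * s ∧
      dotp kvec2 (s • lvec1 + t • lvec2) = 2 * π * t ∧
      dotp kvec3 (s • lvec1 + t • lvec2) = -(2 * π * s) - 2 * π * t := by
  obtain ⟨e00, e01, e10, e11, e20, e21⟩ := kvec_entries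
  have h3 : √3 ≠ 0 := by positivity
  simp only [dotp, Fin.sum_univ_two, Pi.add_apply, Pi.smul_apply, smul_eq_mul, e00, e01, e10, e11,
    e20, e21, lvec1, lvec2, Matrix.cons_val_zero, Matrix.cons_val_one]
  refine ⟨?_, ?_, ?_⟩ <;> field_simp <;> ring

lemma exists_dotp_hexWave_lattice (m : Fin 3) : ∃ a b : ℤ, a.natAbs ≤ 1 ∧ b.natAbs ≤ 1 ∧
    ∀ s t, dotp (hexWave m) (s • lvec1 + t • lvec2) = 2 * π * a * s + 2 * π * b * t := by
  fin_cases m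
  · exact ⟨1, 0, le_rfl, zero_le_one, fun s t => (dotp_kvec_lattice s t).1.trans (by simp)⟩
  · exact ⟨0, 1, zero_le_one, le_rfl, fun s t => (dotp_kvec_lattice s t).2.1.trans (by simp)⟩
  · exact ⟨-1, -1, le_rfl, le_rfl, fun s t =>
      (dotp_kvec_lattice s t).2.2.trans (by push_cast; ring)⟩

lemma mem_trigPoly_of_mem_hexTrigPoly {n : ℕ} {g : (Fin 2 → ℝ) → ℝ} (hg : g ∈ hexTrigPoly n)
    (s t : ℝ) :
    (fun t' => g (s • lvec1 + t' • lvec2)) ∈ trigPoly n ∧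
      (fun s' => g (s' • lvec1 + t • lvec2)) ∈ trigPoly n := by
  have hwave (f : ℝ → ℝ) (hf : f = cos ∨ f = sin) (k : ℤ) (hk : k.natAbs ≤ 1) (c : ℝ) :
      (fun u => f (2 * π * k * u + c)) ∈ trigPoly 1 := by
    refine trigPoly_mono hk ?_
    rcases hf with rfl | rfl
    exacts [cos_mul_add_mem_trigPoly k c, sin_mul_add_mem_trigPoly k c]
  constructor <;> refine comp_mem_trigPoly_of_mem_span_pow ?_ hg
  all_goals
    rintro f (rfl | ⟨m, rfl | rfl⟩)
    · exact const_mem_trigPoly 1 1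
    all_goals
      obtain ⟨a, b, ha, hb, hab⟩ := exists_dotp_hexWave_lattice m
      simp only [Function.comp_def, hab]
  · simpa only [add_comm] using hwave cos (.inl rfl) b hb (2 * π * a * s)
  · simpa only [add_comm] using hwave sin (.inr rfl) b hb (2 * π * a * s)
  · exact hwave cos (.inl rfl) a ha _
  · exact hwave sin (.inr rfl) a ha _

theorem haarAvg_eq_sum_nodes {n N : ℕ} (hnN : n < N) {g : (Fin 2 → ℝ) → ℝ}
    (hg : g ∈ hexTrigPoly n) :
    haarAvg g =
      (∑ j ∈ range N, ∑ k ∈ range N, g ((j / N : ℝ) • lvec1 + (k / N : ℝ) • lvec2)) / N ^ 2 := by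
  have inner (s : ℝ) : ∫ t in (0 : ℝ)..1, g (s • lvec1 + t • lvec2) =
      (∑ k ∈ range N, g (s • lvec1 + (k / N : ℝ) • lvec2)) / N :=
    integral_eq_sum_nodes_of_mem_trigPoly hnN (mem_trigPoly_of_mem_hexTrigPoly hg s 0).1
  have outer :
      (fun s => (∑ k ∈ range N, g (s • lvec1 + (k / N : ℝ) • lvec2)) / N) ∈ trigPoly n := by
    convert (trigPoly n).smul_mem (N : ℝ)⁻¹ <| Submodule.sum_mem _ (t := range N)
      fun k _ => (mem_trigPoly_of_mem_hexTrigPoly hg 0 (k / N : ℝ)).2 using 1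
    ext s; simp [div_eq_inv_mul]
  rw [haarAvg_eq_integral_lattice (continuous_of_mem_hexTrigPoly hg),
    intervalIntegral.integral_congr fun s _ => inner s,
    integral_eq_sum_nodes_of_mem_trigPoly hnN outer, ← sum_div, div_div, sq]

lemma nat_mul_pi_div_two_eq (n : ℕ) :
    (n : ℝ) * (π / 2) = (n % 4 : ℕ) * (π / 2) + (n / 4 : ℕ) * (2 * π) := by
  conv_lhs => rw [← Nat.mod_add_div n 4]
  push_cast; ring

lemma cos_nat_mul_pi_div_two (n : ℕ) :
    cos (n * (π / 2)) = if n % 4 = 0 then 1 else if n % 4 = 2 then -1 else 0 := by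
  rw [nat_mul_pi_div_two_eq, cos_add_nat_mul_two_pi]
  have hr : n % 4 < 4 := Nat.mod_lt n (by norm_num)
  generalize n % 4 = r at hr ⊢
  interval_cases r <;>
    norm_num [show (2 : ℝ) * (π / 2) = π by ring, show (3 : ℝ) * (π / 2) = π / 2 + π by ring]

lemma sin_nat_mul_pi_div_two (n : ℕ) :
    sin (n * (π / 2)) = if n % 4 = 1 then 1 else if n % 4 = 3 then -1 else 0 := by
  rw [nat_mul_pi_div_two_eq, sin_add_nat_mul_two_pi]
  have hr : n % 4 < 4 := Nat.mod_lt n (by norm_num)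
  generalize n % 4 = r at hr ⊢
  interval_cases r <;>
    norm_num [show (2 : ℝ) * (π / 2) = π by ring, show (3 : ℝ) * (π / 2) = π / 2 + π by ring]

lemma dotp_kvec_node (j k : ℕ) :
    dotp kvec1 ((j / 4 : ℝ) • lvec1 + (k / 4 : ℝ) • lvec2) = j * (π / 2) ∧
      dotp kvec2 ((j / 4 : ℝ) • lvec1 + (k / 4 : ℝ) • lvec2) = k * (π / 2) ∧
      dotp kvec3 ((j / 4 : ℝ) • lvec1 + (k / 4 : ℝ) • lvec2) = -(((j + k : ℕ) : ℝ) * (π / 2)) := by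
  obtain ⟨h1, h2, h3⟩ := dotp_kvec_lattice (j / 4) (k / 4)
  refine ⟨?_, ?_, ?_⟩
  · rw [h1]; ring
  · rw [h2]; ring
  · rw [h3]; push_cast; ring

lemma phiHex_mem_hexTrigPoly : phiHex ∈ hexTrigPoly 1 :=
  add_mem (add_mem (cos_dotp_mem_hexTrigPoly 0) (cos_dotp_mem_hexTrigPoly 1))
    (cos_dotp_mem_hexTrigPoly 2)

lemma hessSq_mem_hexTrigPoly : hessSq ∈ hexTrigPoly 2 := by
  have hc (m m' : Fin 3) :=
    mul_mem_hexTrigPoly (cos_dotp_mem_hexTrigPoly m) (cos_dotp_mem_hexTrigPoly m')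
  convert add_mem (add_mem (add_mem (hc 0 0) (hc 1 1)) (hc 2 2))
    (Submodule.smul_mem _ (1 / 2 : ℝ) (add_mem (add_mem (hc 0 1) (hc 0 2)) (hc 1 2))) using 1
  ext x
  simp only [hessSq_eq, Pi.add_apply, Pi.mul_apply, Pi.smul_apply, smul_eq_mul, hexWave_rows]
  ring

lemma thirdSq_mem_hexTrigPoly : thirdSq ∈ hexTrigPoly 2 := by
  have hs (m m' : Fin 3) :=
    mul_mem_hexTrigPoly (sin_dotp_mem_hexTrigPoly m) (sin_dotp_mem_hexTrigPoly m')
  convert sub_mem (add_mem (add_mem (hs 0 0) (hs 1 1)) (hs 2 2))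
    (Submodule.smul_mem _ (1 / 4 : ℝ) (add_mem (add_mem (hs 0 1) (hs 0 2)) (hs 1 2))) using 1
  ext x
  simp only [thirdSq_eq, Pi.add_apply, Pi.sub_apply, Pi.mul_apply, Pi.smul_apply, smul_eq_mul,
    hexWave_rows]
  ring

lemma trHess3_mem_hexTrigPoly : trHess3 ∈ hexTrigPoly 3 := by
  have hc (m₁ m₂ m₃ : Fin 3) := mul_mem_hexTrigPoly (mul_mem_hexTrigPoly
    (cos_dotp_mem_hexTrigPoly m₁) (cos_dotp_mem_hexTrigPoly m₂)) (cos_dotp_mem_hexTrigPoly m₃)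
  convert add_mem (sub_mem (Submodule.smul_mem _ (-1 : ℝ)
      (add_mem (add_mem (hc 0 0 0) (hc 1 1 1)) (hc 2 2 2)))
    (Submodule.smul_mem _ (3 / 4 : ℝ) (add_mem (add_mem (add_mem (add_mem (add_mem
      (hc 0 0 1) (hc 0 0 2)) (hc 1 1 0)) (hc 1 1 2)) (hc 2 2 0)) (hc 2 2 1))))
    (Submodule.smul_mem _ (3 / 4 : ℝ) (hc 0 1 2)) using 1
  ext x
  simp only [trHess3_eq, Pi.add_apply, Pi.sub_apply, Pi.mul_apply, Pi.smul_apply, smul_eq_mul,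
    hexWave_rows]
  ring

@[fun_prop]
lemma continuous_phiHex : Continuous phiHex := continuous_of_mem_hexTrigPoly phiHex_mem_hexTrigPoly

@[fun_prop]
lemma continuous_hessSq : Continuous hessSq := continuous_of_mem_hexTrigPoly hessSq_mem_hexTrigPoly

@[fun_prop]
lemma continuous_thirdSq : Continuous thirdSq :=
  continuous_of_mem_hexTrigPoly thirdSq_mem_hexTrigPoly

@[fun_prop]
lemma continuous_trHess3 : Continuous trHess3 :=
  continuous_of_mem_hexTrigPoly trHess3_mem_hexTrigPoly

lemma haarAvg_one_add_smul_phiHex (ε : ℝ) : haarAvg (1 + ε • phiHex) = 1 := by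
  have hmem : 1 + ε • phiHex ∈ hexTrigPoly 1 :=
    add_mem (const_mem_hexTrigPoly 1 1) (Submodule.smul_mem _ ε phiHex_mem_hexTrigPoly)
  rw [haarAvg_eq_sum_nodes (N := 4) (by norm_num) hmem]
  simp only [Pi.add_apply, Pi.one_apply, Pi.smul_apply, smul_eq_mul, phiHex, Nat.cast_ofNat,
    dotp_kvec_node, cos_neg, cos_nat_mul_pi_div_two, sum_range_succ, sum_range_zero]
  norm_num
  ring

lemma haarAvg_phiHex_polynomial (ε : ℝ) :
    haarAvg (ε • phiHex + ε ^ 2 • phiHex ^ 2 + (ε ^ 3 / 2) • phiHex ^ 3) =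
      3 / 2 * ε ^ 2 + 3 / 4 * ε ^ 3 := by
  have hφ := phiHex_mem_hexTrigPoly
  have hmem : ε • phiHex + ε ^ 2 • phiHex ^ 2 + (ε ^ 3 / 2) • phiHex ^ 3 ∈ hexTrigPoly 3 :=
    add_mem (add_mem (Submodule.smul_mem _ ε (hexTrigPoly_mono (by norm_num) hφ))
      (Submodule.smul_mem _ _ (hexTrigPoly_mono (by norm_num) (pow_mem_hexTrigPoly hφ 2))))
      (Submodule.smul_mem _ _ (pow_mem_hexTrigPoly hφ 3))
  rw [haarAvg_eq_sum_nodes (N := 4) (by norm_num) hmem]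
  simp only [Pi.add_apply, Pi.smul_apply, Pi.pow_apply, smul_eq_mul, phiHex, Nat.cast_ofNat,
    dotp_kvec_node, cos_neg, cos_nat_mul_pi_div_two, sum_range_succ, sum_range_zero]
  norm_num
  ring

lemma haarAvg_hessSq_polynomial (ε : ℝ) :
    haarAvg (ε ^ 2 • hessSq + ε ^ 3 • (hessSq * phiHex)) = 3 / 2 * ε ^ 2 + 3 / 8 * ε ^ 3 := by
  have hmem : ε ^ 2 • hessSq + ε ^ 3 • (hessSq * phiHex) ∈ hexTrigPoly 3 :=
    add_mem (Submodule.smul_mem _ _ (hexTrigPoly_mono (by norm_num) hessSq_mem_hexTrigPoly))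
      (Submodule.smul_mem _ _ (mul_mem_hexTrigPoly hessSq_mem_hexTrigPoly phiHex_mem_hexTrigPoly))
  rw [haarAvg_eq_sum_nodes (N := 4) (by norm_num) hmem]
  simp only [Pi.add_apply, Pi.smul_apply, Pi.mul_apply, smul_eq_mul, hessSq_eq, phiHex,
    Nat.cast_ofNat, dotp_kvec_node, cos_neg, cos_nat_mul_pi_div_two, sum_range_succ,
    sum_range_zero]
  norm_num
  ring

lemma haarAvg_thirdSq_trHess3_polynomial (ε : ℝ) :
    haarAvg (ε ^ 2 • thirdSq + ε ^ 3 • (thirdSq * phiHex) - (2 * ε ^ 3) • trHess3) =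
      3 / 2 * ε ^ 2 - 3 / 16 * ε ^ 3 := by
  have hmem : ε ^ 2 • thirdSq + ε ^ 3 • (thirdSq * phiHex) - (2 * ε ^ 3) • trHess3 ∈
      hexTrigPoly 3 :=
    sub_mem (add_mem
      (Submodule.smul_mem _ _ (hexTrigPoly_mono (by norm_num) thirdSq_mem_hexTrigPoly))
      (Submodule.smul_mem _ _ (mul_mem_hexTrigPoly thirdSq_mem_hexTrigPoly phiHex_mem_hexTrigPoly)))
      (Submodule.smul_mem _ _ trHess3_mem_hexTrigPoly)
  rw [haarAvg_eq_sum_nodes (N := 4) (by norm_num) hmem]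
  simp only [Pi.add_apply, Pi.sub_apply, Pi.smul_apply, Pi.mul_apply, smul_eq_mul, thirdSq_eq,
    trHess3_eq, phiHex, Nat.cast_ofNat, dotp_kvec_node, cos_neg, sin_neg, cos_nat_mul_pi_div_two,
    sin_nat_mul_pi_div_two, sum_range_succ, sum_range_zero]
  norm_num
  ring

/-! ## Estimates -/

lemma abs_phiHex_le (x : Fin 2 → ℝ) : |phiHex x| ≤ 3 := by
  obtain ⟨h₁, h₁'⟩ := abs_le.mp (abs_cos_le_one (dotp kvec1 x))
  obtain ⟨h₂, h₂'⟩ := abs_le.mp (abs_cos_le_one (dotp kvec2 x))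
  obtain ⟨h₃, h₃'⟩ := abs_le.mp (abs_cos_le_one (dotp kvec3 x))
  rw [phiHex, abs_le]
  constructor <;> linarith

lemma abs_hessSq_le (x : Fin 2 → ℝ) : |hessSq x| ≤ 5 := by
  obtain ⟨h₁, h₁'⟩ := abs_le.mp (abs_cos_le_one (dotp kvec1 x))
  obtain ⟨h₂, h₂'⟩ := abs_le.mp (abs_cos_le_one (dotp kvec2 x))
  obtain ⟨h₃, h₃'⟩ := abs_le.mp (abs_cos_le_one (dotp kvec3 x))
  rw [hessSq_eq, abs_le]
  constructor <;> nlinarith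

lemma abs_thirdSq_le (x : Fin 2 → ℝ) : |thirdSq x| ≤ 4 := by
  obtain ⟨h₁, h₁'⟩ := abs_le.mp (abs_sin_le_one (dotp kvec1 x))
  obtain ⟨h₂, h₂'⟩ := abs_le.mp (abs_sin_le_one (dotp kvec2 x))
  obtain ⟨h₃, h₃'⟩ := abs_le.mp (abs_sin_le_one (dotp kvec3 x))
  rw [thirdSq_eq, abs_le]
  constructor <;> nlinarith

lemma abs_trHess3_le (x : Fin 2 → ℝ) : |trHess3 x| ≤ 9 := by
  obtain ⟨h₁, h₁'⟩ := abs_le.mp (abs_cos_le_one (dotp kvec1 x))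
  obtain ⟨h₂, h₂'⟩ := abs_le.mp (abs_cos_le_one (dotp kvec2 x))
  obtain ⟨h₃, h₃'⟩ := abs_le.mp (abs_cos_le_one (dotp kvec3 x))
  rw [trHess3_eq, abs_le]
  constructor <;> nlinarith [mul_nonneg (sub_nonneg.2 h₁') (sub_nonneg.2 h₂'),
    mul_nonneg (sub_nonneg.2 h₁') (sub_nonneg.2 h₃'),
    mul_nonneg (sub_nonneg.2 h₂') (sub_nonneg.2 h₃'),
    mul_nonneg (neg_le_iff_add_nonneg.1 h₁) (neg_le_iff_add_nonneg.1 h₂),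
    mul_nonneg (neg_le_iff_add_nonneg.1 h₁) (neg_le_iff_add_nonneg.1 h₃),
    mul_nonneg (neg_le_iff_add_nonneg.1 h₂) (neg_le_iff_add_nonneg.1 h₃)]

lemma abs_exp_sub_one_sub_id_sub_sq_le {u : ℝ} (hu : |u| ≤ 1) :
    |exp u - 1 - u - u ^ 2 / 2| ≤ |u| ^ 3 := by
  have h := Real.exp_bound hu (n := 3) (by norm_num)
  norm_num [sum_range_succ, Nat.factorial] at h
  have : exp u - 1 - u - u ^ 2 / 2 = exp u - (1 + u + u ^ 2 / 2) := by ring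
  rw [this]
  nlinarith [pow_nonneg (abs_nonneg u) 3]

lemma abs_mul_phiHex_le (ε : ℝ) (x : Fin 2 → ℝ) : |ε * phiHex x| ≤ 3 * |ε| := by
  rw [abs_mul, mul_comm]
  exact mul_le_mul_of_nonneg_right (abs_phiHex_le x) (abs_nonneg ε)

section Estimates

variable {ε : ℝ}

lemma abs_mul_phiHex_le_one (hε : |ε| ≤ 1 / 5) (x : Fin 2 → ℝ) : |ε * phiHex x| ≤ 1 := by
  linarith [abs_mul_phiHex_le ε x]

lemma abs_exp_mul_phiHex_sub_le (hε : |ε| ≤ 1 / 5) (x : Fin 2 → ℝ) :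
    |exp (ε * phiHex x) - 1 - ε * phiHex x| ≤ 9 * ε ^ 2 := by
  calc _ ≤ (ε * phiHex x) ^ 2 := abs_exp_sub_one_sub_id_le (abs_mul_phiHex_le_one hε x)
    _ = |ε * phiHex x| ^ 2 := (sq_abs _).symm
    _ ≤ (3 * |ε|) ^ 2 := by gcongr; exact abs_mul_phiHex_le ε x
    _ = 9 * ε ^ 2 := by rw [mul_pow, sq_abs]; norm_num

lemma abs_Zt_sub_one_le (hε : |ε| ≤ 1 / 5) : |Zt ε - 1| ≤ 9 * ε ^ 2 := by
  have h := abs_haarAvg_sub_le (F := fun x => exp (ε * phiHex x)) (M := 1 + ε • phiHex)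
    (R := fun x => exp (ε * phiHex x) - 1 - ε * phiHex x)
    (fun x => by simp only [Pi.add_apply, Pi.one_apply, Pi.smul_apply, smul_eq_mul]; ring)
    (by fun_prop) (by fun_prop) (abs_exp_mul_phiHex_sub_le hε)
  rwa [haarAvg_one_add_smul_phiHex] at h

lemma abs_numeratorI_sub_le (hε : |ε| ≤ 1 / 5) :
    |haarAvg (fun x => ε * phiHex x * exp (ε * phiHex x)) - (3 / 2 * ε ^ 2 + 3 / 4 * ε ^ 3)|
      ≤ 81 * ε ^ 4 := by
  have h := abs_haarAvg_sub_le (F := fun x => ε * phiHex x * exp (ε * phiHex x))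
    (M := ε • phiHex + ε ^ 2 • phiHex ^ 2 + (ε ^ 3 / 2) • phiHex ^ 3)
    (R := fun x => ε * phiHex x * (exp (ε * phiHex x) - 1 - ε * phiHex x - (ε * phiHex x) ^ 2 / 2))
    (fun x => by simp only [Pi.add_apply, Pi.pow_apply, Pi.smul_apply, smul_eq_mul]; ring)
    (by fun_prop) (by fun_prop) (K := 81 * ε ^ 4) fun x => by
      have hu := abs_mul_phiHex_le ε x
      calc _ = |ε * phiHex x| * |exp (ε * phiHex x) - 1 - ε * phiHex x - (ε * phiHex x) ^ 2 / 2| :=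
            abs_mul _ _
        _ ≤ |ε * phiHex x| * |ε * phiHex x| ^ 3 := by
            gcongr; exact abs_exp_sub_one_sub_id_sub_sq_le (abs_mul_phiHex_le_one hε x)
        _ ≤ (3 * |ε|) * (3 * |ε|) ^ 3 := by gcongr
        _ = 81 * ε ^ 4 := by rw [← Even.pow_abs (by decide : Even 4)]; ring
  rwa [haarAvg_phiHex_polynomial] at h

lemma abs_numeratorQ_sub_le (hε : |ε| ≤ 1 / 5) :
    |haarAvg (fun x => ε ^ 2 * hessSq x * exp (ε * phiHex x)) - (3 / 2 * ε ^ 2 + 3 / 8 * ε ^ 3)|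
      ≤ 45 * ε ^ 4 := by
  have h := abs_haarAvg_sub_le (F := fun x => ε ^ 2 * hessSq x * exp (ε * phiHex x))
    (M := ε ^ 2 • hessSq + ε ^ 3 • (hessSq * phiHex))
    (R := fun x => ε ^ 2 * hessSq x * (exp (ε * phiHex x) - 1 - ε * phiHex x))
    (fun x => by simp only [Pi.add_apply, Pi.mul_apply, Pi.smul_apply, smul_eq_mul]; ring)
    (by fun_prop) (by fun_prop) (K := 45 * ε ^ 4) fun x => by
      calc _ = ε ^ 2 * |hessSq x| * |exp (ε * phiHex x) - 1 - ε * phiHex x| := by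
            rw [abs_mul, abs_mul, abs_of_nonneg (sq_nonneg ε)]
        _ ≤ ε ^ 2 * 5 * (9 * ε ^ 2) := by
            gcongr
            exacts [abs_hessSq_le x, abs_exp_mul_phiHex_sub_le hε x]
        _ = 45 * ε ^ 4 := by ring
  rwa [haarAvg_hessSq_polynomial] at h

lemma abs_numeratorD_sub_le (hε : |ε| ≤ 1 / 5) :
    |haarAvg (fun x => (ε ^ 2 * thirdSq x - 2 * ε ^ 3 * trHess3 x) * exp (ε * phiHex x))
      - (3 / 2 * ε ^ 2 - 3 / 16 * ε ^ 3)| ≤ 144 * ε ^ 4 := by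
  have h := abs_haarAvg_sub_le
    (F := fun x => (ε ^ 2 * thirdSq x - 2 * ε ^ 3 * trHess3 x) * exp (ε * phiHex x))
    (M := ε ^ 2 • thirdSq + ε ^ 3 • (thirdSq * phiHex) - (2 * ε ^ 3) • trHess3)
    (R := fun x => ε ^ 2 * thirdSq x * (exp (ε * phiHex x) - 1 - ε * phiHex x)
      - 2 * ε ^ 3 * trHess3 x * (exp (ε * phiHex x) - 1))
    (fun x => by
      simp only [Pi.add_apply, Pi.sub_apply, Pi.mul_apply, Pi.smul_apply, smul_eq_mul]; ring)
    (by fun_prop) (by fun_prop) (K := 144 * ε ^ 4) fun x => by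
      have hexp : |exp (ε * phiHex x) - 1| ≤ 6 * |ε| := by
        linarith [abs_exp_sub_one_le (abs_mul_phiHex_le_one hε x), abs_mul_phiHex_le ε x]
      calc _ ≤ |ε ^ 2 * thirdSq x * (exp (ε * phiHex x) - 1 - ε * phiHex x)|
            + |2 * ε ^ 3 * trHess3 x * (exp (ε * phiHex x) - 1)| := abs_sub _ _
        _ = ε ^ 2 * |thirdSq x| * |exp (ε * phiHex x) - 1 - ε * phiHex x|
            + 2 * |ε| ^ 3 * |trHess3 x| * |exp (ε * phiHex x) - 1| := by
            simp only [abs_mul, abs_pow, abs_two, sq_abs]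
        _ ≤ ε ^ 2 * 4 * (9 * ε ^ 2) + 2 * |ε| ^ 3 * 9 * (6 * |ε|) := by
            gcongr
            exacts [abs_thirdSq_le x, abs_exp_mul_phiHex_sub_le hε x, abs_trHess3_le x]
        _ = 144 * ε ^ 4 := by linear_combination 108 * Even.pow_abs (by decide : Even 4) ε
  rwa [haarAvg_thirdSq_trHess3_polynomial] at h

end Estimates

lemma abs_div_sub_le_of_abs_sub_le {N Z p a b c : ℝ} (hZ : 1 / 2 ≤ Z) (hN : |N - p| ≤ a)
    (hZ₁ : |Z - 1| ≤ b) (hp : |p| ≤ c) : |N / Z - p| ≤ 2 * (a + c * b) := by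
  have hZ₀ : 0 < Z := by linarith
  rw [show N / Z - p = ((N - p) - p * (Z - 1)) / Z by field_simp; ring, abs_div, abs_of_pos hZ₀,
    div_le_iff₀ hZ₀]
  calc |N - p - p * (Z - 1)| ≤ |N - p| + |p| * |Z - 1| := (abs_sub _ _).trans_eq (by rw [abs_mul])
    _ ≤ a + c * b := by gcongr; exact (abs_nonneg p).trans hp
    _ ≤ 2 * (a + c * b) * Z := by
        have hab : 0 ≤ a + c * b := add_nonneg ((abs_nonneg _).trans hN)
          (mul_nonneg ((abs_nonneg _).trans hp) ((abs_nonneg _).trans hZ₁))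
        nlinarith

lemma abs_leading_le {ε c : ℝ} (hε : |ε| ≤ 1 / 5) (hc : |c| ≤ 3 / 4) :
    |3 / 2 * ε ^ 2 + c * ε ^ 3| ≤ 2 * ε ^ 2 := by
  have h3 : |c * ε ^ 3| ≤ 3 / 4 * (1 / 5) * ε ^ 2 := by
    rw [abs_mul, abs_pow, pow_succ, ← sq_abs ε]
    have := abs_nonneg ε
    have := abs_nonneg c
    calc |c| * (|ε| ^ 2 * |ε|) ≤ 3 / 4 * (|ε| ^ 2 * (1 / 5)) := by gcongr
      _ = _ := by ring
  calc _ ≤ |3 / 2 * ε ^ 2| + |c * ε ^ 3| := abs_add_le _ _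
    _ ≤ 3 / 2 * ε ^ 2 + 3 / 4 * (1 / 5) * ε ^ 2 := by
        rw [abs_of_nonneg (by positivity)]; linarith
    _ ≤ 2 * ε ^ 2 := by nlinarith [sq_nonneg ε]

lemma abs_ratio_sub_le {ε N Z c A : ℝ} (hε : |ε| ≤ 1 / 5) (hc : |c| ≤ 3 / 4)
    (hZ : |Z - 1| ≤ 9 * ε ^ 2) (hN : |N - (3 / 2 * ε ^ 2 + c * ε ^ 3)| ≤ A * ε ^ 4) :
    |N / Z - (3 / 2 * ε ^ 2 + c * ε ^ 3)| ≤ (2 * A + 36) * ε ^ 4 := by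
  have hε2 : ε ^ 2 ≤ 1 / 25 := by
    rw [← sq_abs]; nlinarith [abs_nonneg ε]
  have hZ' : 1 / 2 ≤ Z := by linarith [(abs_le.mp hZ).1]
  calc _ ≤ 2 * (A * ε ^ 4 + 2 * ε ^ 2 * (9 * ε ^ 2)) :=
        abs_div_sub_le_of_abs_sub_le hZ' hN hZ (abs_leading_le hε hc)
    _ = (2 * A + 36) * ε ^ 4 := by ring

/-- Expansions `𝓘(ε) = (3/2)ε² + (3/4)ε³ + O(ε⁴)`, `𝓠(ε) = (3/2)ε² + (3/8)ε³ + O(ε⁴)`,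
`𝓓(ε) = (3/2)ε² − (3/16)ε³ + O(ε⁴)` as `ε → 0`. -/
theorem torus_functional_expansions :
    ∃ C > (0:ℝ), ∃ ε₀ > (0:ℝ), ∀ ε : ℝ, |ε| ≤ ε₀ →
      |calIT ε - ((3/2) * ε ^ 2 + (3/4) * ε ^ 3)| ≤ C * ε ^ 4 ∧
      |calQT ε - ((3/2) * ε ^ 2 + (3/8) * ε ^ 3)| ≤ C * ε ^ 4 ∧
      |calDT ε - ((3/2) * ε ^ 2 - (3/16) * ε ^ 3)| ≤ C * ε ^ 4 := by
  -- `324 = 2 * 144 + 36` comes from `𝓓`; the constants for `𝓘` and `𝓠` are smaller.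
  refine ⟨324, by norm_num, 1 / 5, by norm_num, fun ε hε => ?_⟩
  have hZ := abs_Zt_sub_one_le hε
  have h4 : 0 ≤ ε ^ 4 := by positivity
  have hI := abs_ratio_sub_le hε (by norm_num) hZ (abs_numeratorI_sub_le hε)
  have hQ := abs_ratio_sub_le hε (by norm_num) hZ (abs_numeratorQ_sub_le hε)
  have hD := abs_ratio_sub_le hε (c := -(3 / 16)) (by norm_num) hZ
    (by simpa only [neg_mul, ← sub_eq_add_neg] using abs_numeratorD_sub_le hε)
  simp only [neg_mul, ← sub_eq_add_neg] at hD
  exact ⟨hI.trans (by linarith), hQ.trans (by linarith), hD.trans (by linarith)⟩
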